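/- Let Q_1 and Q_2 be non-empty finite posets. Then for every n ≥ 1, La(n, P_{l(Q_1)+l(Q_2)+1}, Q_1 ⊗_1 Q_2) ≤ max over 0 ≤ j ≤ n of C(n,j) · La(j, P_{l(Q_1)+1}, Q_1) · La(n−j, P_{l(Q_2)+1}, Q_2). -/

import Mathlib

open Classical Finset

noncomputable section

/-- `G` is a copy of the finite poset `α` among the subsets of `[n]`:
there is a bijection `φ` from `α` onto `G` such that `x ≤ y` implies `φ x ⊆ φ y`. -/
def IsCopy (α : Type) [PartialOrder α] [Fintype α] {n : ℕ}
    (G : Finset (Finset (Fin n))) : Prop :=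
  ∃ φ : α → Finset (Fin n), Function.Injective φ ∧
    Finset.image φ Finset.univ = G ∧ ∀ x y : α, x ≤ y → φ x ⊆ φ y

/-- `copyCount α F` is the number of copies of the poset `α` in the family `F`,
copies being counted as subfamilies of `F`. -/
def copyCount (α : Type) [PartialOrder α] [Fintype α] {n : ℕ}
    (F : Finset (Finset (Fin n))) : ℕ :=
  (F.powerset.filter fun G => IsCopy α G).card

/-- `La n P Q`: the maximum number of copies of `Q` in a `P`-free family of subsets of `[n]`. -/
def La (n : ℕ) (P Q : Type) [PartialOrder P] [Fintype P]
    [PartialOrder Q] [Fintype Q] : ℕ :=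
  ((Finset.univ : Finset (Finset (Finset (Fin n)))).filter fun F =>
    copyCount P F = 0).sup (copyCount Q)

/-- `La2 n P₁ P₂ Q`: the maximum number of copies of `Q` in a family of subsets of `[n]`
that is both `P₁`-free and `P₂`-free. -/
def La2 (n : ℕ) (P₁ P₂ Q : Type) [PartialOrder P₁] [Fintype P₁]
    [PartialOrder P₂] [Fintype P₂] [PartialOrder Q] [Fintype Q] : ℕ :=
  ((Finset.univ : Finset (Finset (Finset (Fin n)))).filter fun F =>
    copyCount P₁ F = 0 ∧ copyCount P₂ F = 0).sup (copyCount Q)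

/-- the full `k`-th level of `2^[n]`. -/
def level (n k : ℕ) : Finset (Finset (Fin n)) :=
  Finset.univ.filter fun A => A.card = k

/-- `γ^r_{i,j}(F)`: the number of `r`-element subfamilies of `F` whose intersection has
size `i` and whose union has size `j`. -/
def gammaCount (r n i j : ℕ) (F : Finset (Finset (Fin n))) : ℕ :=
  (F.powerset.filter fun G =>
    G.card = r ∧ (G.inf id).card = i ∧ (G.sup id).card = j).card

/-- `β^r_i(F)`: the number of `r`-element subfamilies of `F` whose intersection has size `i`. -/
def betaCount (r n i : ℕ) (F : Finset (Finset (Fin n))) : ℕ :=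
  (F.powerset.filter fun G => G.card = r ∧ (G.inf id).card = i).card

/-- the complete multi-level poset `K_{r 0, …, r (s-1)}`: level `i` has `r i` elements,
and every element of level `i` is below every element of level `j` whenever `i < j`. -/
def KP {s : ℕ} (r : Fin s → ℕ) : Type := Σ i, Fin (r i)

namespace KP

variable {s : ℕ} {r : Fin s → ℕ}

def le (x y : KP r) : Prop := x = y ∨ x.1 < y.1

instance : PartialOrder (KP r) where
  le := KP.le
  le_refl x := Or.inl rfl
  le_trans x y z hxy hyz := by
    rcases hxy with rfl | h
    · exact hyz
    · rcases hyz with rfl | h'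
      · exact Or.inr h
      · exact Or.inr (h.trans h')
  le_antisymm x y hxy hyx := by
    rcases hxy with rfl | h
    · rfl
    · rcases hyx with rfl | h'
      · rfl
      · exact absurd (h.trans h') (lt_irrefl _)

instance : Fintype (KP r) := inferInstanceAs (Fintype (Σ i, Fin (r i)))

end KP

/-- the chain (totally ordered poset) with `k` elements. -/
abbrev PChain (k : ℕ) := Fin k

/-- `∨_r = K_{1,r}` -/
abbrev VeePoset (r : ℕ) := KP ![1, r]

/-- `∧_r = K_{r,1}` -/
abbrev WedgePoset (r : ℕ) := KP ![r, 1]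

/-- the generalized diamond `D_r = K_{1,r,1}` -/
abbrev DiamondPoset (r : ℕ) := KP ![1, r, 1]

/-- the butterfly poset `B = K_{2,2}` -/
abbrev Butterfly := KP ![2, 2]

/-- the height `l(Q)` of a finite poset: the number of elements of a longest chain. -/
def height (Q : Type) [PartialOrder Q] [Fintype Q] : ℕ :=
  ((Finset.univ : Finset (Finset Q)).filter fun C : Finset Q =>
    IsChain (· ≤ ·) (↑C : Set Q)).sup Finset.card


/-- `Q₁ ⊗_r Q₂`: disjoint copies of `Q₁` and `Q₂` with an `r`-element antichain in between;
everything in `Q₁` is below the middle elements and below everything in `Q₂`,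
and the middle elements are below everything in `Q₂`. -/
inductive Otimes (Q₁ Q₂ : Type) (r : ℕ) : Type
  | bot : Q₁ → Otimes Q₁ Q₂ r
  | mid : Fin r → Otimes Q₁ Q₂ r
  | top : Q₂ → Otimes Q₁ Q₂ r

namespace Otimes

variable {Q₁ Q₂ : Type} {r : ℕ}

def le [PartialOrder Q₁] [PartialOrder Q₂] : Otimes Q₁ Q₂ r → Otimes Q₁ Q₂ r → Prop
  | bot a, bot b => a ≤ b
  | bot _, mid _ => True
  | bot _, top _ => True
  | mid i, mid j => i = j
  | mid _, top _ => True
  | top a, top b => a ≤ b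
  | _, _ => False

instance [PartialOrder Q₁] [PartialOrder Q₂] : PartialOrder (Otimes Q₁ Q₂ r) where
  le := Otimes.le
  le_refl x := by cases x <;> simp [Otimes.le]
  le_trans x y z hxy hyz := by
    cases x <;> cases y <;> cases z <;> simp_all [Otimes.le] <;>
      first
        | exact le_trans hxy hyz
        | trivial
  le_antisymm x y hxy hyx := by
    cases x <;> cases y <;> simp_all [Otimes.le] <;>
      first
        | exact le_antisymm hxy hyx
        | rfl

instance [Fintype Q₁] [Fintype Q₂] : Fintype (Otimes Q₁ Q₂ r) :=
  Fintype.ofEquiv (Q₁ ⊕ Fin r ⊕ Q₂)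
    { toFun := fun x => match x with
        | Sum.inl a => bot a
        | Sum.inr (Sum.inl i) => mid i
        | Sum.inr (Sum.inr b) => top b
      invFun := fun x => match x with
        | bot a => Sum.inl a
        | mid i => Sum.inr (Sum.inl i)
        | top b => Sum.inr (Sum.inr b)
      left_inv := fun x => by rcases x with a | (i | b) <;> rfl
      right_inv := fun x => by cases x <;> rfl }

end Otimes

/-- `Q ⊕ r`: the poset obtained from `Q` by adding an antichain of `r` new elements,
each above every element of `Q`. -/
inductive Oplus (Q : Type) (r : ℕ) : Type
  | base : Q → Oplus Q r
  | new : Fin r → Oplus Q r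

namespace Oplus

variable {Q : Type} {r : ℕ}

def le [PartialOrder Q] : Oplus Q r → Oplus Q r → Prop
  | base a, base b => a ≤ b
  | base _, new _ => True
  | new i, new j => i = j
  | new _, base _ => False

instance [PartialOrder Q] : PartialOrder (Oplus Q r) where
  le := Oplus.le
  le_refl x := by cases x <;> simp [Oplus.le]
  le_trans x y z hxy hyz := by
    cases x <;> cases y <;> cases z <;> simp_all [Oplus.le] <;>
      first
        | exact le_trans hxy hyz
        | trivial
  le_antisymm x y hxy hyx := by
    cases x <;> cases y <;> simp_all [Oplus.le] <;>
      first
        | exact le_antisymm hxy hyx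
        | rfl

instance [Fintype Q] : Fintype (Oplus Q r) :=
  Fintype.ofEquiv (Q ⊕ Fin r)
    { toFun := fun x => match x with
        | Sum.inl a => base a
        | Sum.inr i => new i
      invFun := fun x => match x with
        | base a => Sum.inl a
        | new i => Sum.inr i
      left_inv := fun x => by rcases x with a | i <;> rfl
      right_inv := fun x => by cases x <;> rfl }

end Oplus

/-- the poset `N`: four elements `a, b, c, d` with `a ≤ c`, `b ≤ c`, `b ≤ d`
and no other nontrivial relations. -/
inductive NPoset : Type
  | a | b | c | d
  deriving DecidableEq

instance : Fintype NPoset :=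
  ⟨{NPoset.a, NPoset.b, NPoset.c, NPoset.d}, fun x => by cases x <;> simp⟩

namespace NPoset

def le : NPoset → NPoset → Prop := fun x y =>
  x = y ∨ (x = a ∧ y = c) ∨ (x = b ∧ y = c) ∨ (x = b ∧ y = d)

instance : DecidableRel le := fun x y => by unfold le; infer_instance

theorem le_refl' : ∀ x : NPoset, le x x := by decide
theorem le_trans' : ∀ x y z : NPoset, le x y → le y z → le x z := by decide
theorem le_antisymm' : ∀ x y : NPoset, le x y → le y x → x = y := by decide

instance : PartialOrder NPoset :=
  { le := le, le_refl := le_refl', le_trans := le_trans', le_antisymm := le_antisymm' }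

end NPoset

/-- the poset `B⁺`: five elements with `a < c`, `a < e`, `b < c`, `b < d`, `d < e`
(and the relation `b < e` forced by transitivity). -/
inductive BPlusPoset : Type
  | a | b | c | d | e
  deriving DecidableEq

instance : Fintype BPlusPoset :=
  ⟨{BPlusPoset.a, BPlusPoset.b, BPlusPoset.c, BPlusPoset.d, BPlusPoset.e}, fun x => by cases x <;> simp⟩

namespace BPlusPoset

def le : BPlusPoset → BPlusPoset → Prop := fun x y =>
  x = y ∨ (x = a ∧ y = c) ∨ (x = a ∧ y = e) ∨ (x = b ∧ y = c) ∨ (x = b ∧ y = d) ∨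
    (x = b ∧ y = e) ∨ (x = d ∧ y = e)

instance : DecidableRel le := fun x y => by unfold le; infer_instance

theorem le_refl' : ∀ x : BPlusPoset, le x x := by decide
theorem le_trans' : ∀ x y z : BPlusPoset, le x y → le y z → le x z := by decide
theorem le_antisymm' : ∀ x y : BPlusPoset, le x y → le y x → x = y := by decide

instance : PartialOrder BPlusPoset :=
  { le := le, le_refl := le_refl', le_trans := le_trans', le_antisymm := le_antisymm' }

end BPlusPoset

/-- the poset `B⁺⁺`: five elements with `a, b < c, d` and `d < e`
(hence also `a < e` and `b < e`). -/
inductive BPlusPlusPoset : Type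
  | a | b | c | d | e
  deriving DecidableEq

instance : Fintype BPlusPlusPoset :=
  ⟨{BPlusPlusPoset.a, BPlusPlusPoset.b, BPlusPlusPoset.c, BPlusPlusPoset.d, BPlusPlusPoset.e}, fun x => by cases x <;> simp⟩

namespace BPlusPlusPoset

def le : BPlusPlusPoset → BPlusPlusPoset → Prop := fun x y =>
  x = y ∨ (x = a ∧ y = c) ∨ (x = a ∧ y = d) ∨ (x = a ∧ y = e) ∨ (x = b ∧ y = c) ∨
    (x = b ∧ y = d) ∨ (x = b ∧ y = e) ∨ (x = d ∧ y = e)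

instance : DecidableRel le := fun x y => by unfold le; infer_instance

theorem le_refl' : ∀ x : BPlusPlusPoset, le x x := by decide
theorem le_trans' : ∀ x y z : BPlusPlusPoset, le x y → le y z → le x z := by decide
theorem le_antisymm' : ∀ x y : BPlusPlusPoset, le x y → le y x → x = y := by decide

instance : PartialOrder BPlusPlusPoset :=
  { le := le, le_refl := le_refl', le_trans := le_trans', le_antisymm := le_antisymm' }

end BPlusPlusPoset

/-- the binary entropy function `h(x) = -x log₂ x - (1-x) log₂ (1-x)`. -/
def binEnt (x : ℝ) : ℝ := -x * Real.logb 2 x - (1 - x) * Real.logb 2 (1 - x)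

/-!
Every copy of `Q₁ ⊗₁ Q₂` in a family `F` has a middle set `M` with a chain of `l(Q₁)` members
of `F` strictly below it and a chain of `l(Q₂)` members strictly above it. If `F` has no chain of
`l(Q₁) + l(Q₂) + 2` sets (in particular if it has none of `l(Q₁) + l(Q₂) + 1`), then the middle
sets form an antichain, the members of `F` strictly below `M` form a `P_{l(Q₁)+1}`-free family in
the interval `[∅, M] ≅ 2^[|M|]`, and those strictly above `M` a `P_{l(Q₂)+1}`-free family in
`[M, [n]] ≅ 2^[n - |M|]`. A copy with middle `M` is determined by its members below and above
`M`, so at most `La(|M|, P_{l(Q₁)+1}, Q₁) · La(n - |M|, P_{l(Q₂)+1}, Q₂)` copies have middle `M`,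
and the LYM inequality bounds the sum of these products over the antichain of middles by their
maximum weighted by `C(n, j)`.
-/

section Chains

variable {α : Type*}

def HasChain [Preorder α] (k : ℕ) (s : Finset α) : Prop :=
  ∃ f : Fin k → α, StrictMono f ∧ ∀ i, f i ∈ s

variable [Preorder α] {k a b : ℕ} {s t : Finset α}

theorem HasChain.mono (h : HasChain k s) (hst : s ⊆ t) : HasChain k t :=
  let ⟨f, hf, hfs⟩ := h
  ⟨f, hf, fun i => hst (hfs i)⟩

theorem HasChain.of_le (h : HasChain k s) {j : ℕ} (hjk : j ≤ k) : HasChain j s :=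
  let ⟨f, hf, hfs⟩ := h
  ⟨f ∘ Fin.castLE hjk, hf.comp (Fin.strictMono_castLE hjk), fun _ => hfs _⟩

theorem hasChain_singleton (x : α) : HasChain 1 {x} :=
  ⟨fun _ => x, Subsingleton.strictMono _, fun _ => Finset.mem_singleton_self x⟩

theorem StrictMono.fin_append {f : Fin a → α} {g : Fin b → α} (hf : StrictMono f)
    (hg : StrictMono g) (hfg : ∀ i j, f i < g j) : StrictMono (Fin.append f g) := by
  intro i j hij
  induction i using Fin.addCases with
  | left i =>
    induction j using Fin.addCases with
    | left j =>
      rw [Fin.append_left, Fin.append_left]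
      exact hf ((Fin.strictMono_castAdd b).lt_iff_lt.mp hij)
    | right j => rw [Fin.append_left, Fin.append_right]; exact hfg i j
  | right i =>
    induction j using Fin.addCases with
    | left j => exact absurd hij (by simp only [Fin.lt_def, Fin.val_castAdd, Fin.val_natAdd]; omega)
    | right j =>
      rw [Fin.append_right, Fin.append_right]
      exact hg ((Fin.strictMono_natAdd a).lt_iff_lt.mp hij)

theorem HasChain.append (h₁ : HasChain a s) (h₂ : HasChain b t)
    (hst : ∀ x ∈ s, ∀ y ∈ t, x < y) : HasChain (a + b) (s ∪ t) := by
  obtain ⟨f, hf, hfs⟩ := h₁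
  obtain ⟨g, hg, hgt⟩ := h₂
  refine ⟨Fin.append f g, hf.fin_append hg fun i j => hst _ (hfs i) _ (hgt j), fun i => ?_⟩
  induction i using Fin.addCases with
  | left i => rw [Fin.append_left]; exact Finset.mem_union_left t (hfs i)
  | right i => rw [Fin.append_right]; exact Finset.mem_union_right s (hgt i)

theorem hasChain_add_one_add [DecidableLT α] {F : Finset α} {M : α}
    (h₁ : HasChain a (F.filter (· < M))) (hM : M ∈ F) (h₂ : HasChain b (F.filter (M < ·))) :
    HasChain (a + 1 + b) F := by
  refine ((h₁.append (hasChain_singleton M) ?_).append h₂ ?_).mono ?_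
  · simp +contextual
  · simp only [Finset.mem_union, Finset.mem_filter, Finset.mem_singleton]
    rintro x (⟨-, hx⟩ | rfl) y ⟨-, hy⟩
    exacts [hx.trans hy, hy]
  · simp +contextual [Finset.subset_iff, or_imp, hM]

end Chains

theorem IsChain.exists_strictMono_fin {α : Type*} [PartialOrder α] {C : Finset α}
    (hC : IsChain (· ≤ ·) (C : Set α)) : ∃ f : Fin C.card → α, StrictMono f ∧ ∀ i, f i ∈ C := by
  let _ := hC.linearOrder
  let e := Fintype.orderIsoFinOfCardEq (C : Set α) (k := C.card) (by simp)
  exact ⟨fun i => (e i).1, fun i j hij => e.strictMono hij, fun i => (e i).2⟩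

section Copies

variable {n : ℕ}

theorem copyCount_eq_zero_iff {α : Type} [PartialOrder α] [Fintype α]
    {G : Finset (Finset (Fin n))} :
    copyCount α G = 0 ↔ ∀ H ⊆ G, ¬IsCopy α H := by
  simp [copyCount, Finset.filter_eq_empty_iff]

theorem copyCount_chain_eq_zero_iff {k : ℕ} {G : Finset (Finset (Fin n))} :
    copyCount (PChain k) G = 0 ↔ ¬HasChain k G := by
  rw [copyCount_eq_zero_iff]
  constructor
  · rintro hG ⟨f, hf, hfG⟩
    refine hG _ ?_ ⟨f, hf.injective, rfl, fun i j hij => hf.monotone hij⟩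
    simpa [Finset.subset_iff] using hfG
  · rintro hG H hHG ⟨f, hf, rfl, hmono⟩
    exact hG ⟨f, (Monotone.strictMono_of_injective (fun i j hij => hmono i j hij) hf),
      fun i => hHG (Finset.mem_image_of_mem f (Finset.mem_univ i))⟩

theorem exists_isChain_card_eq_height (Q : Type) [PartialOrder Q] [Fintype Q] :
    ∃ C : Finset Q, IsChain (· ≤ ·) (C : Set Q) ∧ C.card = height Q := by
  obtain ⟨C, hC, hcard⟩ := Finset.exists_mem_eq_sup
    (Finset.univ.filter fun C : Finset Q => IsChain (· ≤ ·) (C : Set Q)) ⟨∅, by simp⟩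
    Finset.card
  exact ⟨C, (Finset.mem_filter.mp hC).2, hcard.symm⟩

theorem IsCopy.hasChain_height {Q : Type} [PartialOrder Q] [Fintype Q]
    {G : Finset (Finset (Fin n))} (hG : IsCopy Q G) : HasChain (height Q) G := by
  obtain ⟨φ, hinj, rfl, hmono⟩ := hG
  obtain ⟨C, hC, hcard⟩ := exists_isChain_card_eq_height Q
  obtain ⟨f, hf, -⟩ := hC.exists_strictMono_fin
  rw [← hcard]
  exact ⟨φ ∘ f, (Monotone.strictMono_of_injective (fun x y h => hmono x y h) hinj).comp hf,
    fun i => Finset.mem_image_of_mem φ (Finset.mem_univ _)⟩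

end Copies

section Transfer

variable {m n : ℕ}

theorem isCopy_image_iff {α : Type} [PartialOrder α] [Fintype α]
    (e : Finset (Fin m) ↪o Finset (Fin n)) {G : Finset (Finset (Fin m))} :
    IsCopy α (G.image e) ↔ IsCopy α G := by
  constructor
  · rintro ⟨ψ, hinj, himg, hmono⟩
    have hψ : ∀ x, ∃ B, e B = ψ x := fun x =>
      (Finset.mem_image.mp (himg ▸ Finset.mem_image_of_mem ψ (Finset.mem_univ x))).imp
        fun _ h => h.2
    choose φ hφ using hψ
    have he : e ∘ φ = ψ := funext hφ
    refine ⟨φ, fun x y h => hinj (by rw [← hφ, ← hφ, h]), ?_, fun x y h => ?_⟩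
    · apply Finset.image_injective e.injective
      rw [Finset.image_image, he, himg]
    · rw [← e.le_iff_le, hφ, hφ]
      exact hmono x y h
  · rintro ⟨φ, hinj, rfl, hmono⟩
    exact ⟨e ∘ φ, e.injective.comp hinj, by rw [Finset.image_image],
      fun x y h => e.monotone (hmono x y h)⟩

theorem copyCount_image {α : Type} [PartialOrder α] [Fintype α]
    (e : Finset (Fin m) ↪o Finset (Fin n)) (G : Finset (Finset (Fin m))) :
    copyCount α (G.image e) = copyCount α G := by
  rw [copyCount, copyCount, Finset.powerset_image, Finset.filter_image,
    Finset.card_image_of_injOn ((Finset.image_injOn_powerset_of_injOn e.injective.injOn).mono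
      (Finset.filter_subset _ _))]
  simp only [isCopy_image_iff]

theorem copyCount_le_La_of_subset_range {P Q : Type} [PartialOrder P] [Fintype P]
    [PartialOrder Q] [Fintype Q] (e : Finset (Fin m) ↪o Finset (Fin n))
    {G : Finset (Finset (Fin n))} (hG : ∀ A ∈ G, A ∈ Set.range e) (hfree : copyCount P G = 0) :
    copyCount Q G ≤ La m P Q := by
  obtain ⟨G, -, rfl⟩ := Finset.subset_image_iff.mp fun A hA =>
    Finset.mem_image.mpr (by simpa using hG A hA : ∃ B ∈ Finset.univ, e B = A)
  rw [copyCount_image] at hfree ⊢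
  exact Finset.le_sup (Finset.mem_filter.mpr ⟨Finset.mem_univ _, hfree⟩)

theorem Finset.range_mapEmbedding {α β : Type*} [Fintype β] (f : β ↪ α) :
    Set.range (Finset.mapEmbedding f) = Set.Iic (Finset.univ.map f) := by
  ext A
  simp only [Set.mem_range, Finset.mapEmbedding_apply, Set.mem_Iic,
    Finset.subset_map_iff, Finset.subset_univ, true_and, eq_comm]

theorem exists_orderEmbedding_range_eq_Iic (M : Finset (Fin n)) :
    ∃ e : Finset (Fin M.card) ↪o Finset (Fin n), Set.range e = Set.Iic M :=
  ⟨Finset.mapEmbedding (M.orderEmbOfFin rfl).toEmbedding, by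
    rw [Finset.range_mapEmbedding, Finset.map_orderEmbOfFin_univ]⟩

theorem exists_orderEmbedding_range_eq_Ici (M : Finset (Fin n)) :
    ∃ e : Finset (Fin (n - M.card)) ↪o Finset (Fin n), Set.range e = Set.Ici M := by
  let f := Finset.mapEmbedding
    (Mᶜ.orderEmbOfFin (k := n - M.card) (by simp [Finset.card_compl])).toEmbedding
  have hf : Set.range f = Set.Iic Mᶜ := by
    rw [Finset.range_mapEmbedding, Finset.map_orderEmbOfFin_univ]
  have hdisj : ∀ B, Disjoint M (f B) := fun B => by
    have : f B ∈ Set.Iic Mᶜ := hf ▸ Set.mem_range_self B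
    exact Finset.disjoint_of_subset_right this disjoint_compl_right
  refine ⟨OrderEmbedding.ofMapLEIff (fun B => M ∪ f B) fun B B' => ?_, ?_⟩
  · rw [← f.le_iff_le]
    refine ⟨fun h => ?_, fun h => Finset.union_subset_union_right h⟩
    rw [← Finset.union_sdiff_cancel_left (hdisj B), ← Finset.union_sdiff_cancel_left (hdisj B')]
    exact Finset.sdiff_subset_sdiff h le_rfl
  · ext A
    simp only [Set.mem_range, OrderEmbedding.coe_ofMapLEIff, Set.mem_Ici]
    refine ⟨fun ⟨B, hB⟩ => hB ▸ Finset.subset_union_left, fun hMA => ?_⟩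
    obtain ⟨B, hB⟩ : A \ M ∈ Set.range f := by
      rw [hf]
      exact fun x hx => Finset.mem_compl.mpr (Finset.mem_sdiff.mp hx).2
    exact ⟨B, by rw [hB, Finset.union_sdiff_of_subset hMA]⟩

end Transfer

namespace Otimes

variable {Q₁ Q₂ : Type} {r : ℕ}

theorem bot_injective : Function.Injective (bot : Q₁ → Otimes Q₁ Q₂ r) :=
  fun _ _ h => by cases h; rfl

theorem top_injective : Function.Injective (top : Q₂ → Otimes Q₁ Q₂ r) :=
  fun _ _ h => by cases h; rfl

variable [PartialOrder Q₁] [PartialOrder Q₂]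

theorem bot_lt_mid (a : Q₁) (i : Fin r) : (bot a : Otimes Q₁ Q₂ r) < mid i :=
  ⟨trivial, id⟩

theorem mid_lt_top (i : Fin r) (b : Q₂) : (mid i : Otimes Q₁ Q₂ r) < top b :=
  ⟨trivial, id⟩

end Otimes

section Middle

open Otimes

def IsCopyWithMiddle (Q₁ Q₂ : Type) [PartialOrder Q₁] [Fintype Q₁] [PartialOrder Q₂]
    [Fintype Q₂] {n : ℕ} (G : Finset (Finset (Fin n))) (M : Finset (Fin n)) : Prop :=
  ∃ φ : Otimes Q₁ Q₂ 1 → Finset (Fin n), Function.Injective φ ∧ Finset.univ.image φ = G ∧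
    (∀ x y, x ≤ y → φ x ⊆ φ y) ∧ φ (mid 0) = M

variable {Q₁ Q₂ : Type} [PartialOrder Q₁] [Fintype Q₁] [PartialOrder Q₂] [Fintype Q₂] {n : ℕ}
variable {F G : Finset (Finset (Fin n))} {M : Finset (Fin n)}

theorem IsCopy.exists_isCopyWithMiddle (h : IsCopy (Otimes Q₁ Q₂ 1) G) :
    ∃ M, IsCopyWithMiddle Q₁ Q₂ G M :=
  let ⟨φ, hinj, himg, hmono⟩ := h
  ⟨_, φ, hinj, himg, hmono, rfl⟩

namespace IsCopyWithMiddle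

theorem mem (h : IsCopyWithMiddle Q₁ Q₂ G M) : M ∈ G := by
  obtain ⟨φ, -, rfl, -, rfl⟩ := h
  exact Finset.mem_image_of_mem φ (Finset.mem_univ _)

theorem isCopy_filter_lt (h : IsCopyWithMiddle Q₁ Q₂ G M) : IsCopy Q₁ (G.filter (· < M)) := by
  obtain ⟨φ, hinj, rfl, hmono, rfl⟩ := h
  have hφ : StrictMono φ := Monotone.strictMono_of_injective (fun x y h => hmono x y h) hinj
  refine ⟨φ ∘ bot, hinj.comp bot_injective, ?_, fun a b h => hmono _ _ h⟩
  ext A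
  simp only [Finset.mem_image, Finset.mem_filter, Finset.mem_univ, true_and, Function.comp_apply]
  constructor
  · rintro ⟨a, rfl⟩
    exact ⟨⟨bot a, rfl⟩, hφ (bot_lt_mid a 0)⟩
  · rintro ⟨⟨z, rfl⟩, hz⟩
    rcases z with a | i | b
    · exact ⟨a, rfl⟩
    · exact absurd hz (by rw [Fin.fin_one_eq_zero i]; exact lt_irrefl _)
    · exact absurd (hφ (mid_lt_top 0 b)) (lt_asymm hz)

theorem isCopy_filter_gt (h : IsCopyWithMiddle Q₁ Q₂ G M) : IsCopy Q₂ (G.filter (M < ·)) := by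
  obtain ⟨φ, hinj, rfl, hmono, rfl⟩ := h
  have hφ : StrictMono φ := Monotone.strictMono_of_injective (fun x y h => hmono x y h) hinj
  refine ⟨φ ∘ top, hinj.comp top_injective, ?_, fun a b h => hmono _ _ h⟩
  ext A
  simp only [Finset.mem_image, Finset.mem_filter, Finset.mem_univ, true_and, Function.comp_apply]
  constructor
  · rintro ⟨b, rfl⟩
    exact ⟨⟨top b, rfl⟩, hφ (mid_lt_top 0 b)⟩
  · rintro ⟨⟨z, rfl⟩, hz⟩
    rcases z with a | i | b
    · exact absurd (hφ (bot_lt_mid a 0)) (lt_asymm hz)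
    · exact absurd hz (by rw [Fin.fin_one_eq_zero i]; exact lt_irrefl _)
    · exact ⟨b, rfl⟩

theorem eq_insert_filter (h : IsCopyWithMiddle Q₁ Q₂ G M) :
    G = insert M (G.filter (· < M) ∪ G.filter (M < ·)) := by
  refine le_antisymm (fun A hA => ?_) (Finset.insert_subset h.mem (Finset.union_subset
    (Finset.filter_subset _ _) (Finset.filter_subset _ _)))
  obtain ⟨φ, hinj, rfl, hmono, rfl⟩ := h
  have hφ : StrictMono φ := Monotone.strictMono_of_injective (fun x y h => hmono x y h) hinj
  simp only [Finset.mem_insert, Finset.mem_union, Finset.mem_filter, hA, true_and]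
  obtain ⟨z, -, rfl⟩ := Finset.mem_image.mp hA
  rcases z with a | i | b
  · exact Or.inr (Or.inl (hφ (bot_lt_mid a 0)))
  · exact Or.inl (by rw [Fin.fin_one_eq_zero i])
  · exact Or.inr (Or.inr (hφ (mid_lt_top 0 b)))

theorem hasChain_lt (h : IsCopyWithMiddle Q₁ Q₂ G M) (hGF : G ⊆ F) :
    HasChain (height Q₁) (F.filter (· < M)) :=
  h.isCopy_filter_lt.hasChain_height.mono (Finset.filter_subset_filter _ hGF)

theorem hasChain_gt (h : IsCopyWithMiddle Q₁ Q₂ G M) (hGF : G ⊆ F) :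
    HasChain (height Q₂) (F.filter (M < ·)) :=
  h.isCopy_filter_gt.hasChain_height.mono (Finset.filter_subset_filter _ hGF)

end IsCopyWithMiddle

theorem card_filter_isCopyWithMiddle_le (F : Finset (Finset (Fin n))) (M : Finset (Fin n)) :
    (F.powerset.filter (IsCopyWithMiddle Q₁ Q₂ · M)).card ≤
      copyCount Q₁ (F.filter (· < M)) * copyCount Q₂ (F.filter (M < ·)) := by
  rw [copyCount, copyCount, ← Finset.card_product]
  refine Finset.card_le_card_of_injOn (fun G => (G.filter (· < M), G.filter (M < ·))) ?_ ?_
  · intro G hG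
    obtain ⟨hGF, hG⟩ := Finset.mem_filter.mp hG
    simp only [Finset.mem_coe, Finset.mem_product, Finset.mem_filter, Finset.mem_powerset]
    exact ⟨⟨Finset.filter_subset_filter _ (Finset.mem_powerset.mp hGF), hG.isCopy_filter_lt⟩,
      Finset.filter_subset_filter _ (Finset.mem_powerset.mp hGF), hG.isCopy_filter_gt⟩
  · intro G hG G' hG' heq
    obtain ⟨hlt, hgt⟩ := Prod.mk.inj heq
    rw [(Finset.mem_filter.mp hG).2.eq_insert_filter, (Finset.mem_filter.mp hG').2.eq_insert_filter,
      hlt, hgt]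

end Middle

section ChainFree

variable {Q₁ Q₂ : Type} [PartialOrder Q₁] [Fintype Q₁] [PartialOrder Q₂] [Fintype Q₂] {n : ℕ}
  {F G G' : Finset (Finset (Fin n))} {M M' : Finset (Fin n)}
  (hfree : ¬HasChain (height Q₁ + height Q₂ + 2) F)
include hfree

theorem IsCopyWithMiddle.not_lt (h : IsCopyWithMiddle Q₁ Q₂ G M) (hGF : G ⊆ F)
    (h' : IsCopyWithMiddle Q₁ Q₂ G' M') (hG'F : G' ⊆ F) : ¬M < M' := by
  intro hMM'
  have habove : HasChain (1 + height Q₂) (F.filter (M < ·)) := by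
    refine ((hasChain_singleton M').append (h'.hasChain_gt hG'F) ?_).mono ?_
    · simp +contextual
    · simp only [Finset.subset_iff, Finset.mem_union, Finset.mem_singleton, Finset.mem_filter]
      rintro A (rfl | ⟨hA, hMA⟩)
      exacts [⟨hG'F h'.mem, hMM'⟩, ⟨hA, hMM'.trans hMA⟩]
  have := hasChain_add_one_add (h.hasChain_lt hGF) (hGF h.mem) habove
  exact hfree (this.of_le (by omega))

theorem IsCopyWithMiddle.not_hasChain_lt (h : IsCopyWithMiddle Q₁ Q₂ G M) (hGF : G ⊆ F) :
    ¬HasChain (height Q₁ + 1) (F.filter (· < M)) := fun hc =>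
  have := hasChain_add_one_add hc (hGF h.mem) (h.hasChain_gt hGF)
  hfree (this.of_le (by omega))

theorem IsCopyWithMiddle.not_hasChain_gt (h : IsCopyWithMiddle Q₁ Q₂ G M) (hGF : G ⊆ F) :
    ¬HasChain (height Q₂ + 1) (F.filter (M < ·)) := fun hc =>
  have := hasChain_add_one_add (h.hasChain_lt hGF) (hGF h.mem) hc
  hfree (this.of_le (by omega))

theorem IsCopyWithMiddle.copyCount_filter_lt_le (h : IsCopyWithMiddle Q₁ Q₂ G M) (hGF : G ⊆ F) :
    copyCount Q₁ (F.filter (· < M)) ≤ La M.card (PChain (height Q₁ + 1)) Q₁ := by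
  obtain ⟨e, he⟩ := exists_orderEmbedding_range_eq_Iic M
  exact copyCount_le_La_of_subset_range e (fun A hA => he ▸ (Finset.mem_filter.mp hA).2.le)
    (copyCount_chain_eq_zero_iff.mpr (h.not_hasChain_lt hfree hGF))

theorem IsCopyWithMiddle.copyCount_filter_gt_le (h : IsCopyWithMiddle Q₁ Q₂ G M) (hGF : G ⊆ F) :
    copyCount Q₂ (F.filter (M < ·)) ≤ La (n - M.card) (PChain (height Q₂ + 1)) Q₂ := by
  obtain ⟨e, he⟩ := exists_orderEmbedding_range_eq_Ici M
  exact copyCount_le_La_of_subset_range e (fun A hA => he ▸ (Finset.mem_filter.mp hA).2.le)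
    (copyCount_chain_eq_zero_iff.mpr (h.not_hasChain_gt hfree hGF))

end ChainFree

theorem sum_le_of_isAntichain {α : Type*} [Fintype α] {A : Finset (Finset α)}
    (hA : IsAntichain (· ⊆ ·) (A : Set (Finset α))) (w : ℕ → ℕ) {K : ℕ}
    (hK : ∀ j ≤ Fintype.card α, (Fintype.card α).choose j * w j ≤ K) :
    ∑ s ∈ A, w s.card ≤ K := by
  set N := Fintype.card α
  have hlym := Finset.sum_card_slice_div_choose_le_one (𝕜 := ℚ) hA
  have hcard : ∀ s ∈ A, s.card ∈ Finset.range (N + 1) := fun s _ =>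
    Finset.mem_range_succ_iff.mpr (Finset.card_le_univ s)
  have hslice : ∀ j ∈ Finset.range (N + 1),
      (∑ s ∈ A with s.card = j, (w s.card : ℚ)) ≤ (A # j).card / N.choose j * K := by
    intro j hj
    have hjN := Finset.mem_range_succ_iff.mp hj
    have hchoose : (N.choose j : ℚ) ≠ 0 := Nat.cast_ne_zero.mpr (Nat.choose_pos hjN).ne'
    have hw : (N.choose j : ℚ) * w j ≤ K := by exact_mod_cast hK j hjN
    calc (∑ s ∈ A with s.card = j, (w s.card : ℚ))
        = (A # j).card / N.choose j * (N.choose j * w j) := by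
          rw [Finset.sum_congr rfl fun s hs => by rw [(Finset.mem_filter.mp hs).2],
            Finset.sum_const, nsmul_eq_mul, Finset.slice]
          field_simp
      _ ≤ (A # j).card / N.choose j * K := by gcongr
  have : (∑ s ∈ A, w s.card : ℚ) ≤ K :=
    calc (∑ s ∈ A, w s.card : ℚ)
        = ∑ j ∈ Finset.range (N + 1), ∑ s ∈ A with s.card = j, (w s.card : ℚ) :=
          (Finset.sum_fiberwise_of_maps_to hcard _).symm
      _ ≤ ∑ j ∈ Finset.range (N + 1), ((A # j).card / N.choose j : ℚ) * K :=
          Finset.sum_le_sum hslice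
      _ ≤ K := by rw [← Finset.sum_mul]; exact mul_le_of_le_one_left (Nat.cast_nonneg K) hlym
  exact_mod_cast this

section Main

variable {Q₁ Q₂ : Type} [PartialOrder Q₁] [Fintype Q₁] [PartialOrder Q₂] [Fintype Q₂] {n : ℕ}

theorem copyCount_otimes_le_sum_card (F : Finset (Finset (Fin n))) :
    copyCount (Otimes Q₁ Q₂ 1) F ≤
      ∑ M ∈ F.filter (fun M => ∃ G ⊆ F, IsCopyWithMiddle Q₁ Q₂ G M),
        (F.powerset.filter (IsCopyWithMiddle Q₁ Q₂ · M)).card := by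
  refine (Finset.card_le_card fun G hG => ?_).trans Finset.card_biUnion_le
  obtain ⟨hGF, hG⟩ := Finset.mem_filter.mp hG
  obtain ⟨M, hM⟩ := hG.exists_isCopyWithMiddle
  have hGF' := Finset.mem_powerset.mp hGF
  exact Finset.mem_biUnion.mpr ⟨M, Finset.mem_filter.mpr ⟨hGF' hM.mem, G, hGF', hM⟩,
    Finset.mem_filter.mpr ⟨hGF, hM⟩⟩

theorem copyCount_otimes_le {F : Finset (Finset (Fin n))}
    (hfree : copyCount (PChain (height Q₁ + height Q₂ + 2)) F = 0) {K : ℕ}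
    (hK : ∀ j ≤ n, n.choose j * (La j (PChain (height Q₁ + 1)) Q₁ *
      La (n - j) (PChain (height Q₂ + 1)) Q₂) ≤ K) :
    copyCount (Otimes Q₁ Q₂ 1) F ≤ K := by
  rw [copyCount_chain_eq_zero_iff] at hfree
  set A := F.filter (fun M => ∃ G ⊆ F, IsCopyWithMiddle Q₁ Q₂ G M)
  have hA : IsAntichain (· ⊆ ·) (A : Set (Finset (Fin n))) := by
    intro M hM M' hM' hne hMM'
    obtain ⟨-, G, hGF, hG⟩ := Finset.mem_filter.mp hM
    obtain ⟨-, G', hG'F, hG'⟩ := Finset.mem_filter.mp hM'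
    exact hG.not_lt hfree hGF hG' hG'F (lt_of_le_of_ne hMM' hne)
  calc copyCount (Otimes Q₁ Q₂ 1) F
      ≤ ∑ M ∈ A, (F.powerset.filter (IsCopyWithMiddle Q₁ Q₂ · M)).card :=
        copyCount_otimes_le_sum_card F
    _ ≤ ∑ M ∈ A, La M.card (PChain (height Q₁ + 1)) Q₁ *
          La (n - M.card) (PChain (height Q₂ + 1)) Q₂ := by
        refine Finset.sum_le_sum fun M hM => ?_
        obtain ⟨-, G, hGF, hG⟩ := Finset.mem_filter.mp hM
        exact (card_filter_isCopyWithMiddle_le F M).trans (Nat.mul_le_mul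
          (hG.copyCount_filter_lt_le hfree hGF) (hG.copyCount_filter_gt_le hfree hGF))
    _ ≤ K := sum_le_of_isAntichain hA (fun j => La j (PChain (height Q₁ + 1)) Q₁ *
          La (n - j) (PChain (height Q₂ + 1)) Q₂) (by simpa using hK)

theorem La_otimes_le {K : ℕ}
    (hK : ∀ j ≤ n, n.choose j * (La j (PChain (height Q₁ + 1)) Q₁ *
      La (n - j) (PChain (height Q₂ + 1)) Q₂) ≤ K) :
    La n (PChain (height Q₁ + height Q₂ + 2)) (Otimes Q₁ Q₂ 1) ≤ K :=
  Finset.sup_le fun _ hF => copyCount_otimes_le (Finset.mem_filter.mp hF).2 hK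

end Main

theorem La_chain_le_La_chain_succ (n k : ℕ) (Q : Type) [PartialOrder Q] [Fintype Q] :
    La n (PChain k) Q ≤ La n (PChain (k + 1)) Q :=
  Finset.sup_mono <| Finset.monotone_filter_right _ fun F _ hF => by
    simp only [copyCount_chain_eq_zero_iff] at hF ⊢
    exact fun hc => hF (hc.of_le k.le_succ)

theorem statement13_general (Q₁ Q₂ : Type) [PartialOrder Q₁] [Fintype Q₁]
    [PartialOrder Q₂] [Fintype Q₂] (n : ℕ) :
    ∃ j : ℕ, j ≤ n ∧
      La n (PChain (height Q₁ + height Q₂ + 1)) (Otimes Q₁ Q₂ 1) ≤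
        n.choose j * La j (PChain (height Q₁ + 1)) Q₁ *
          La (n - j) (PChain (height Q₂ + 1)) Q₂ := by
  obtain ⟨j, hj, hmax⟩ := Finset.exists_max_image (Finset.range (n + 1))
    (fun j => n.choose j * La j (PChain (height Q₁ + 1)) Q₁ *
      La (n - j) (PChain (height Q₂ + 1)) Q₂) ⟨0, by simp⟩
  refine ⟨j, Finset.mem_range_succ_iff.mp hj, ?_⟩
  refine (La_chain_le_La_chain_succ _ _ _).trans (La_otimes_le fun i hi => ?_)
  simpa only [mul_assoc] using hmax i (Finset.mem_range_succ_iff.mpr hi)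

theorem statement13 (Q₁ Q₂ : Type) [PartialOrder Q₁] [Fintype Q₁] [Nonempty Q₁]
    [PartialOrder Q₂] [Fintype Q₂] [Nonempty Q₂] (n : ℕ) (hn : 1 ≤ n) :
    ∃ j : ℕ, j ≤ n ∧
      La n (PChain (height Q₁ + height Q₂ + 1)) (Otimes Q₁ Q₂ 1) ≤
        n.choose j * La j (PChain (height Q₁ + 1)) Q₁ *
          La (n - j) (PChain (height Q₂ + 1)) Q₂ :=
  statement13_general Q₁ Q₂ n
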